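/- arXiv:1802.05200 — 3 statements merged into one kernel-verified Lean document; each statement's English description precedes it below -/
import Mathlib

section
/- Let n = 3 and let p, q, r ∈ (0,1). There exist p', q', r' ∈ (0,1) such that the lazy transposition sequence with parameters (1,2,p),(2,3,q),(1,2,r) and the one with parameters (2,3,p'),(1,2,q'),(2,3,r') induce the same distribution on S_3 (i.e., for every α ∈ S_3 the total weights ∑_{ω : π(ω)=α} w(ω) agree) if and only if p/(1-p) + r/(1-r) = q/(1-q); moreover, in that case the unique such choice is (p', q', r') = (r, q, p). -/
open Finset

/-- The random permutation determined by outcomes `ω`: the composition `s₁ ∘ s₂ ∘ ⋯ ∘ s_ℓ`,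
where `sᵢ` is the transposition swapping `a i` and `b i` if `ω i = true` and the identity
otherwise (convention `(σ * τ) x = σ (τ x)`). -/
def lazyPerm {n ℓ : ℕ} (a b : Fin ℓ → Fin n) (ω : Fin ℓ → Bool) : Equiv.Perm (Fin n) :=
  (List.ofFn fun i => if ω i then Equiv.swap (a i) (b i) else 1).prod

/-- The weight `∏ᵢ pᵢ^{ωᵢ} (1-pᵢ)^{1-ωᵢ}` of an outcome `ω`. -/
def lazyWeight {ℓ : ℕ} (p : Fin ℓ → ℝ) (ω : Fin ℓ → Bool) : ℝ :=
  ∏ i, if ω i then p i else 1 - p i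

/-- `(aᵢ, bᵢ, pᵢ)ᵢ` is a transposition shuffle of order `n`: a lazy transposition sequence
(`aᵢ ≠ bᵢ`, `pᵢ ∈ [0,1]`) such that the induced distribution on `Sₙ` is uniform. -/
def IsTranspositionShuffle (n ℓ : ℕ) (a b : Fin ℓ → Fin n) (p : Fin ℓ → ℝ) : Prop :=
  (∀ i, a i ≠ b i) ∧ (∀ i, 0 ≤ p i ∧ p i ≤ 1) ∧
    ∀ α : Equiv.Perm (Fin n),
      ∑ ω ∈ univ.filter fun ω : Fin ℓ → Bool => lazyPerm a b ω = α,
        lazyWeight p ω = 1 / (n.factorial : ℝ)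


/-- The induced distribution on permutations: the total weight of outcomes producing `α`. -/
def lazyDist {n ℓ : ℕ} (a b : Fin ℓ → Fin n) (p : Fin ℓ → ℝ) (α : Equiv.Perm (Fin n)) : ℝ :=
  ∑ ω ∈ univ.filter fun ω : Fin ℓ → Bool => lazyPerm a b ω = α, lazyWeight p ω

/-! Conditioning on the first coin gives the recursion `lazyDist_cons`, which computes both
distributions on `S₃` outright. The transposition `(1 3)` and the two 3-cycles are each produced
by exactly one outcome, and their weights force `(p', q', r') = (r, q, p)`. With that choice the
two distributions can differ only at `(1 2)` and `(2 3)`, and equality there is the odds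
condition. -/

open Equiv

section LazyDist

variable {n ℓ : ℕ}

theorem lazyPerm_cons (a₀ b₀ : Fin n) (a b : Fin ℓ → Fin n) (x : Bool) (ω : Fin ℓ → Bool) :
    lazyPerm (Matrix.vecCons a₀ a) (Matrix.vecCons b₀ b) (Fin.cons x ω) =
      (if x then swap a₀ b₀ else 1) * lazyPerm a b ω := by
  simp [lazyPerm, List.ofFn_succ]

theorem lazyWeight_cons (p₀ : ℝ) (p : Fin ℓ → ℝ) (x : Bool) (ω : Fin ℓ → Bool) :
    lazyWeight (Matrix.vecCons p₀ p) (Fin.cons x ω) =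
      (if x then p₀ else 1 - p₀) * lazyWeight p ω := by
  simp [lazyWeight, Fin.prod_univ_succ]

theorem lazyDist_zero (a b : Fin 0 → Fin n) (p : Fin 0 → ℝ) (α : Perm (Fin n)) :
    lazyDist a b p α = if α = 1 then 1 else 0 := by
  rw [lazyDist, sum_filter, Fintype.sum_unique]
  simp [lazyPerm, lazyWeight, @eq_comm _ 1 α]

theorem lazyDist_cons (a₀ b₀ : Fin n) (a b : Fin ℓ → Fin n) (p₀ : ℝ) (p : Fin ℓ → ℝ)
    (α : Perm (Fin n)) :
    lazyDist (Matrix.vecCons a₀ a) (Matrix.vecCons b₀ b) (Matrix.vecCons p₀ p) α =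
      p₀ * lazyDist a b p (swap a₀ b₀ * α) + (1 - p₀) * lazyDist a b p α := by
  simp only [lazyDist, sum_filter, mul_sum]
  rw [← (Fin.consEquiv fun _ => Bool).sum_comp, Fintype.sum_prod_type, Fintype.sum_bool]
  simp [Fin.consEquiv, lazyPerm_cons, lazyWeight_cons, ← eq_inv_mul_iff_mul_eq]

end LazyDist

theorem lazyDist_braid_eq_iff (p q r p' q' r' : ℝ) :
    (∀ α : Perm (Fin 3), lazyDist ![0, 1, 0] ![1, 2, 1] ![p, q, r] α =
      lazyDist ![1, 0, 1] ![2, 1, 2] ![p', q', r'] α) ↔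
    (1 - p) * (1 - q) * (1 - r) + p * (1 - q) * r =
        (1 - p') * (1 - q') * (1 - r') + p' * (1 - q') * r' ∧
      p * (1 - q) * (1 - r) + (1 - p) * (1 - q) * r = (1 - p') * q' * (1 - r') ∧
      (1 - p) * q * (1 - r) = p' * (1 - q') * (1 - r') + (1 - p') * (1 - q') * r' ∧
      p * q * r = p' * q' * r' ∧
      p * q * (1 - r) = (1 - p') * q' * r' ∧
      (1 - p) * q * r = p' * q' * (1 - r') := by
  constructor
  · intro h
    have e₁ := h 1
    have e₂ := h (swap 0 1)
    have e₃ := h (swap 1 2)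
    have e₄ := h (swap 0 2)
    have e₅ := h (swap 0 1 * swap 1 2)
    have e₆ := h (swap 1 2 * swap 0 1)
    simp +decide only [lazyDist_cons, lazyDist_zero, if_true, if_false] at e₁ e₂ e₃ e₄ e₅ e₆
    refine ⟨?_, ?_, ?_, ?_, ?_, ?_⟩ <;> linarith
  · rintro ⟨e₁, e₂, e₃, e₄, e₅, e₆⟩ α
    fin_cases α <;> simp +decide only [lazyDist_cons, lazyDist_zero, if_true, if_false] <;>
      linarith

theorem braid_params_eq_of_mul_eq {p q r p' q' r' : ℝ} (hp : p ≠ 0) (hq : q ≠ 0) (hr : r ≠ 0)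
    (h₁ : p * q * r = p' * q' * r') (h₂ : p * q * (1 - r) = (1 - p') * q' * r')
    (h₃ : (1 - p) * q * r = p' * q' * (1 - r')) :
    p' = r ∧ q' = q ∧ r' = p := by
  have hq'r' : q' * r' = p * q := by linear_combination -h₁ - h₂
  have hp'q' : p' * q' = q * r := by linear_combination -h₁ - h₃
  have hp' : p' = r := by
    refine mul_right_cancel₀ (mul_ne_zero hp hq) ?_
    linear_combination -p' * hq'r' - h₁
  have hq' : q' = q := mul_left_cancel₀ hr (by linear_combination hp'q' - q' * hp')
  exact ⟨hp', hq', mul_left_cancel₀ hq (by linear_combination hq'r' - r' * hq')⟩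

theorem odds_add_odds_eq_odds_iff {p q r : ℝ} (hp : p ≠ 1) (hq : q ≠ 1) (hr : r ≠ 1) :
    p / (1 - p) + r / (1 - r) = q / (1 - q) ↔
      (1 - p) * q * (1 - r) = (p * (1 - r) + (1 - p) * r) * (1 - q) := by
  rw [div_add_div _ _ (sub_ne_zero.2 hp.symm) (sub_ne_zero.2 hr.symm),
    div_eq_div_iff (mul_ne_zero (sub_ne_zero.2 hp.symm) (sub_ne_zero.2 hr.symm))
      (sub_ne_zero.2 hq.symm)]
  constructor <;> intro h <;> linear_combination -h

/-- braid lemma: for `p, q, r ∈ (0,1)`, there exist `p', q', r' ∈ (0,1)` such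
that the lazy transposition sequences `(1,2,p),(2,3,q),(1,2,r)` and `(2,3,p'),(1,2,q'),(2,3,r')`
induce the same distribution on `S₃` if and only if `p/(1-p) + r/(1-r) = q/(1-q)`; and in
that case the unique choice is `(p',q',r') = (r,q,p)`.  (Positions are `0,1,2` in `Fin 3`.) -/
theorem braid_move_lemma (p q r : ℝ)
    (hp : p ∈ Set.Ioo (0 : ℝ) 1) (hq : q ∈ Set.Ioo (0 : ℝ) 1) (hr : r ∈ Set.Ioo (0 : ℝ) 1) :
    ((∃ p' q' r' : ℝ, p' ∈ Set.Ioo (0 : ℝ) 1 ∧ q' ∈ Set.Ioo (0 : ℝ) 1 ∧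
        r' ∈ Set.Ioo (0 : ℝ) 1 ∧
        ∀ α : Equiv.Perm (Fin 3),
          lazyDist ![0, 1, 0] ![1, 2, 1] ![p, q, r] α =
            lazyDist ![1, 0, 1] ![2, 1, 2] ![p', q', r'] α) ↔
      p / (1 - p) + r / (1 - r) = q / (1 - q)) ∧
    ∀ p' q' r' : ℝ, p' ∈ Set.Ioo (0 : ℝ) 1 → q' ∈ Set.Ioo (0 : ℝ) 1 →
      r' ∈ Set.Ioo (0 : ℝ) 1 →
      (∀ α : Equiv.Perm (Fin 3),
        lazyDist ![0, 1, 0] ![1, 2, 1] ![p, q, r] α =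
          lazyDist ![1, 0, 1] ![2, 1, 2] ![p', q', r'] α) →
      p' = r ∧ q' = q ∧ r' = p := by
  have unique : ∀ p' q' r' : ℝ, (∀ α : Equiv.Perm (Fin 3),
      lazyDist ![0, 1, 0] ![1, 2, 1] ![p, q, r] α =
        lazyDist ![1, 0, 1] ![2, 1, 2] ![p', q', r'] α) → p' = r ∧ q' = q ∧ r' = p := by
    intro p' q' r' h
    obtain ⟨-, -, -, h₁, h₂, h₃⟩ := (lazyDist_braid_eq_iff ..).1 h
    exact braid_params_eq_of_mul_eq hp.1.ne' hq.1.ne' hr.1.ne' h₁ h₂ h₃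
  rw [odds_add_odds_eq_odds_iff hp.2.ne hq.2.ne hr.2.ne]
  refine ⟨⟨?_, fun h => ⟨r, q, p, hr, hq, hp, ?_⟩⟩, fun p' q' r' _ _ _ => unique p' q' r'⟩
  · rintro ⟨p', q', r', -, -, -, h⟩
    obtain ⟨rfl, rfl, rfl⟩ := unique p' q' r' h
    obtain ⟨-, -, h₃, -⟩ := (lazyDist_braid_eq_iff ..).1 h
    linear_combination h₃
  · exact (lazyDist_braid_eq_iff ..).2
      ⟨by ring, by linear_combination -h, by linear_combination h, by ring, by ring, by ring⟩
end

section
/- Any reduced word of order n may be transformed into any other reduced word of order n by a finite sequence of commuting moves and braid moves. -/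
/-!
The length `ℓ σ` of a permutation is its number of inversions. Multiplying on the left by an
adjacent transposition `s k` changes it by exactly one, so a word `k :: w` is reduced for `σ` iff
`k` is a left descent of `σ` (`ℓ (s k * σ) < ℓ σ`) and `w` is reduced for `s k * σ`.

Matsumoto's argument then works by induction on `ℓ σ`. Two reduced words with the same first letter
are connected through their tails. If they begin with different descents `j ≠ k`, then `σ` also has
reduced words `j k z`, `k j z` (when `|j - k| ≥ 2`) or `j k j z`, `k j k z` (when `k = j + 1`) with
a common tail `z`. These two differ by a single move, and each shares its first letter with one of
the given words.
-/

/-- The simple transposition `t(k)` of `Fin n` swapping positions `k` and `k+1`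
(`0`-based; the identity if `k+1 ≥ n`). -/
def simpleSwap (n k : ℕ) : Equiv.Perm (Fin n) :=
  if h : k + 1 < n then Equiv.swap ⟨k, Nat.lt_of_succ_lt h⟩ ⟨k + 1, h⟩ else 1

/-- The reverse permutation `ρ`. -/
def reversePerm (n : ℕ) : Equiv.Perm (Fin n) := ⟨Fin.rev, Fin.rev, Fin.rev_rev, Fin.rev_rev⟩

/-- A reduced word of order `n`: a word of length `n(n-1)/2` in the letters `{0,…,n-2}`
(`0`-based) whose composition of simple transpositions is the reverse permutation. -/
def IsReducedWord (n : ℕ) (w : List ℕ) : Prop :=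
  w.length = n * (n - 1) / 2 ∧ (∀ x ∈ w, x + 1 < n) ∧
    (w.map fun k => simpleSwap n k).prod = reversePerm n

/-- A single move on words: a commuting move (exchanging two consecutive letters differing
by at least `2`) or a braid move (replacing consecutive `(k, k+1, k)` by `(k+1, k, k+1)`
or vice versa). -/
inductive WordMove : List ℕ → List ℕ → Prop
  | comm (u v : List ℕ) (x y : ℕ) (h : x + 2 ≤ y ∨ y + 2 ≤ x) :
      WordMove (u ++ x :: y :: v) (u ++ y :: x :: v)
  | braid (u v : List ℕ) (k : ℕ) :
      WordMove (u ++ k :: (k + 1) :: k :: v) (u ++ (k + 1) :: k :: (k + 1) :: v)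
  | braid_inv (u v : List ℕ) (k : ℕ) :
      WordMove (u ++ (k + 1) :: k :: (k + 1) :: v) (u ++ k :: (k + 1) :: k :: v)

open Equiv Finset Relation

lemma Equiv.swap_lt_swap_iff_of_covBy {α : Type*} [LinearOrder α] {a b x y : α} (hab : a ⋖ b) :
    swap a b x < swap a b y ↔ x < y ∧ ¬(x = a ∧ y = b) ∨ x = b ∧ y = a := by
  have h₁ : ∀ c, a < c → b ≤ c := fun c => hab.ge_of_gt
  have h₂ : ∀ c, c < b → c ≤ a := fun c => hab.le_of_lt
  grind [hab.lt]

namespace Equiv.Perm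

variable {α : Type*} [LinearOrder α] [Fintype α]

def inversions (σ : Perm α) : Finset (α × α) := {p | p.1 < p.2 ∧ σ p.2 < σ p.1}

def numInversions (σ : Perm α) : ℕ := #σ.inversions

@[simp]
lemma mem_inversions {σ : Perm α} {p : α × α} :
    p ∈ σ.inversions ↔ p.1 < p.2 ∧ σ p.2 < σ p.1 := by
  simp [inversions]

@[simp]
lemma numInversions_one : numInversions (1 : Perm α) = 0 := by
  simp [numInversions, Finset.eq_empty_iff_forall_notMem]
  exact fun _ _ => le_of_lt

lemma numInversions_of_strictAnti {σ : Perm α} (hσ : StrictAnti σ) :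
    σ.numInversions = (Fintype.card α).choose 2 := by
  rw [numInversions, ← card_univ, ← card_product_filter_lt, univ_product_univ]
  congr 1
  ext p
  simp only [mem_inversions, mem_filter, mem_univ, true_and, and_iff_left_iff_imp]
  exact fun h => hσ h

lemma eq_one_of_strictMono {σ : Perm α} (hσ : StrictMono σ) : σ = 1 := by
  have : hσ.orderIsoOfSurjective σ σ.surjective = OrderIso.refl α := Subsingleton.elim _ _
  ext x
  exact congrArg (· x) this

variable {a b : α} {σ : Perm α}

lemma inversions_swap_mul_of_lt (hab : a ⋖ b) (h : σ⁻¹ a < σ⁻¹ b) :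
    (swap a b * σ).inversions = insert (σ⁻¹ a, σ⁻¹ b) σ.inversions := by
  ext ⟨x, y⟩
  simp only [mem_inversions, mem_insert, Prod.mk.injEq, mul_apply, swap_lt_swap_iff_of_covBy hab]
  have hσ : ∀ z, σ⁻¹ (σ z) = z := σ.symm_apply_apply
  rw [Perm.eq_inv_iff_eq, Perm.eq_inv_iff_eq]
  grind

lemma numInversions_swap_mul_of_lt (hab : a ⋖ b) (h : σ⁻¹ a < σ⁻¹ b) :
    (swap a b * σ).numInversions = σ.numInversions + 1 := by
  rw [numInversions, inversions_swap_mul_of_lt hab h, card_insert_of_notMem]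
  · rfl
  · simp [hab.lt.le]

lemma numInversions_swap_mul_of_gt (hab : a ⋖ b) (h : σ⁻¹ b < σ⁻¹ a) :
    (swap a b * σ).numInversions + 1 = σ.numInversions := by
  have key := numInversions_swap_mul_of_lt hab (σ := swap a b * σ)
    (by simpa [mul_inv_rev, swap_inv])
  rwa [swap_mul_self_mul, eq_comm] at key

lemma numInversions_swap_mul_lt_iff (hab : a ⋖ b) :
    (swap a b * σ).numInversions < σ.numInversions ↔ σ⁻¹ b < σ⁻¹ a := by
  rcases lt_trichotomy (σ⁻¹ a) (σ⁻¹ b) with h | h | h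
  · rw [numInversions_swap_mul_of_lt hab h]
    exact iff_of_false (by omega) (not_lt.2 h.le)
  · exact absurd (σ⁻¹.injective h) hab.lt.ne
  · rw [← numInversions_swap_mul_of_gt hab h]
    exact iff_of_true (by omega) h

lemma numInversions_swap_mul_le (hab : a ⋖ b) :
    (swap a b * σ).numInversions ≤ σ.numInversions + 1 := by
  rcases lt_or_gt_of_ne (σ⁻¹.injective.ne hab.lt.ne) with h | h
  · exact (numInversions_swap_mul_of_lt hab h).le
  · linarith [numInversions_swap_mul_of_gt hab h]

end Equiv.Perm

open Perm

section SimpleSwap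

variable {n k : ℕ} {σ : Perm (Fin n)}

lemma Fin.mk_covBy_mk_add_one (h : k + 1 < n) : (⟨k, by omega⟩ : Fin n) ⋖ ⟨k + 1, h⟩ :=
  ⟨Fin.mk_lt_mk.2 k.lt_succ_self, fun c h₁ h₂ => by
    rw [Fin.lt_def] at h₁ h₂
    simp only at h₁ h₂
    omega⟩

lemma simpleSwap_of_lt (h : k + 1 < n) : simpleSwap n k = swap ⟨k, by omega⟩ ⟨k + 1, h⟩ :=
  dif_pos h

lemma simpleSwap_of_not_lt (h : ¬k + 1 < n) : simpleSwap n k = 1 :=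
  dif_neg h

@[simp]
lemma simpleSwap_mul_self_mul : simpleSwap n k * (simpleSwap n k * σ) = σ := by
  by_cases h : k + 1 < n
  · rw [simpleSwap_of_lt h, swap_mul_self_mul]
  · rw [simpleSwap_of_not_lt h, one_mul, one_mul]

@[simp]
lemma simpleSwap_inv : (simpleSwap n k)⁻¹ = simpleSwap n k := by
  by_cases h : k + 1 < n
  · rw [simpleSwap_of_lt h, swap_inv]
  · rw [simpleSwap_of_not_lt h, inv_one]

lemma simpleSwap_apply_left (h : k + 1 < n) : simpleSwap n k ⟨k, by omega⟩ = ⟨k + 1, h⟩ := by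
  rw [simpleSwap_of_lt h, swap_apply_left]

lemma simpleSwap_apply_right (h : k + 1 < n) : simpleSwap n k ⟨k + 1, h⟩ = ⟨k, by omega⟩ := by
  rw [simpleSwap_of_lt h, swap_apply_right]

lemma simpleSwap_apply_of_ne {m : ℕ} (hm : m < n) (h₁ : m ≠ k) (h₂ : m ≠ k + 1) :
    simpleSwap n k ⟨m, hm⟩ = ⟨m, hm⟩ := by
  by_cases h : k + 1 < n
  · rw [simpleSwap_of_lt h]
    exact swap_apply_of_ne_of_ne (Fin.ne_of_val_ne h₁) (Fin.ne_of_val_ne h₂)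
  · rw [simpleSwap_of_not_lt h, one_apply]

lemma simpleSwap_mul_inv_apply (x : Fin n) : (simpleSwap n k * σ)⁻¹ x = σ⁻¹ (simpleSwap n k x) := by
  rw [mul_inv_rev, simpleSwap_inv, mul_apply]

lemma simpleSwap_mul_comm {j : ℕ} (h : j + 2 ≤ k ∨ k + 2 ≤ j) :
    simpleSwap n j * simpleSwap n k = simpleSwap n k * simpleSwap n j := by
  by_cases hj : j + 1 < n
  · by_cases hk : k + 1 < n
    · rw [simpleSwap_of_lt hj, simpleSwap_of_lt hk]
      refine (disjoint_swap_swap ?_).commute.eq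
      simp [Fin.ext_iff]
      omega
    · rw [simpleSwap_of_not_lt hk, mul_one, one_mul]
  · rw [simpleSwap_of_not_lt hj, mul_one, one_mul]

-- For `k + 2 = n` the relation fails: `simpleSwap n (k + 1) = 1` while `simpleSwap n k ≠ 1`.
lemma simpleSwap_braid (h : k + 2 < n) :
    simpleSwap n k * simpleSwap n (k + 1) * simpleSwap n k =
      simpleSwap n (k + 1) * simpleSwap n k * simpleSwap n (k + 1) := by
  rw [simpleSwap_of_lt (k := k) (by omega), simpleSwap_of_lt (k := k + 1) h]
  set x : Fin n := ⟨k, by omega⟩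
  set y : Fin n := ⟨k + 1, by omega⟩
  set z : Fin n := ⟨k + 1 + 1, h⟩
  have hxy : x ≠ y := by simp [x, y, Fin.ext_iff]
  have hxz : x ≠ z := by simp [x, z, Fin.ext_iff]; omega
  have hyz : y ≠ z := by simp [y, z, Fin.ext_iff]
  rw [swap_mul_swap_mul_swap hxy hxz, swap_comm x y, swap_comm y z,
    swap_mul_swap_mul_swap hyz.symm hxz.symm, swap_comm]

lemma numInversions_simpleSwap_mul_le :
    (simpleSwap n k * σ).numInversions ≤ σ.numInversions + 1 := by
  by_cases h : k + 1 < n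
  · rw [simpleSwap_of_lt h]
    exact numInversions_swap_mul_le (Fin.mk_covBy_mk_add_one h)
  · simp [simpleSwap_of_not_lt h]

end SimpleSwap

def wordProd (n : ℕ) (w : List ℕ) : Perm (Fin n) := (w.map (simpleSwap n)).prod

@[simp]
lemma wordProd_nil (n : ℕ) : wordProd n [] = 1 := rfl

@[simp]
lemma wordProd_cons (n k : ℕ) (w : List ℕ) :
    wordProd n (k :: w) = simpleSwap n k * wordProd n w := rfl

lemma WordMove.cons (k : ℕ) {u v : List ℕ} (h : WordMove u v) : WordMove (k :: u) (k :: v) := by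
  cases h with
  | comm u v x y hxy => exact .comm (k :: u) v x y hxy
  | braid u v j => exact .braid (k :: u) v j
  | braid_inv u v j => exact .braid_inv (k :: u) v j

section ReducedWords

variable {n j k : ℕ} {σ : Perm (Fin n)}

lemma numInversions_wordProd_le (w : List ℕ) : (wordProd n w).numInversions ≤ w.length := by
  induction w with
  | nil => simp
  | cons k w ih => simpa using numInversions_simpleSwap_mul_le.trans (Nat.add_le_add_right ih 1)

def IsReducedWordFor (σ : Perm (Fin n)) (w : List ℕ) : Prop :=
  w.length = σ.numInversions ∧ wordProd n w = σ

def IsLeftDescent (σ : Perm (Fin n)) (k : ℕ) : Prop :=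
  (simpleSwap n k * σ).numInversions < σ.numInversions

lemma isLeftDescent_iff :
    IsLeftDescent σ k ↔ ∃ h : k + 1 < n, σ⁻¹ ⟨k + 1, h⟩ < σ⁻¹ ⟨k, by omega⟩ := by
  by_cases h : k + 1 < n
  · rw [IsLeftDescent, simpleSwap_of_lt h,
      numInversions_swap_mul_lt_iff (Fin.mk_covBy_mk_add_one h)]
    exact ⟨fun h' => ⟨h, h'⟩, fun ⟨_, h'⟩ => h'⟩
  · simp [IsLeftDescent, simpleSwap_of_not_lt h, h]

lemma IsLeftDescent.numInversions_simpleSwap_mul_add_one (h : IsLeftDescent σ k) :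
    (simpleSwap n k * σ).numInversions + 1 = σ.numInversions := by
  have := numInversions_simpleSwap_mul_le (k := k) (σ := simpleSwap n k * σ)
  rw [simpleSwap_mul_self_mul] at this
  exact le_antisymm h this

lemma isReducedWordFor_cons_iff {w : List ℕ} :
    IsReducedWordFor σ (k :: w) ↔ IsLeftDescent σ k ∧ IsReducedWordFor (simpleSwap n k * σ) w := by
  constructor
  · rintro ⟨hl, hp⟩
    have hw : wordProd n w = simpleSwap n k * σ := by
      rw [← hp, wordProd_cons, simpleSwap_mul_self_mul]
    have h₁ := hw ▸ numInversions_wordProd_le (n := n) w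
    have h₂ := numInversions_simpleSwap_mul_le (k := k) (σ := simpleSwap n k * σ)
    rw [simpleSwap_mul_self_mul] at h₂
    rw [List.length_cons] at hl
    exact ⟨by unfold IsLeftDescent; omega, by omega, hw⟩
  · rintro ⟨hd, hl, hp⟩
    refine ⟨?_, by rw [wordProd_cons, hp, simpleSwap_mul_self_mul]⟩
    rw [List.length_cons, hl, hd.numInversions_simpleSwap_mul_add_one]

lemma exists_isLeftDescent (hσ : σ ≠ 1) : ∃ k, IsLeftDescent σ k := by
  have hmono : ¬StrictMono ⇑σ⁻¹ := fun h => hσ (inv_eq_one.1 (eq_one_of_strictMono h))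
  cases n with
  | zero => exact absurd (Subsingleton.elim σ 1) hσ
  | succ m =>
    rw [Fin.strictMono_iff_lt_succ] at hmono
    simp only [not_forall, not_lt] at hmono
    obtain ⟨i, hi⟩ := hmono
    exact ⟨i, isLeftDescent_iff.2 ⟨by omega,
      lt_of_le_of_ne hi (σ⁻¹.injective.ne Fin.castSucc_lt_succ.ne')⟩⟩

lemma exists_isReducedWordFor (σ : Perm (Fin n)) : ∃ w, IsReducedWordFor σ w := by
  by_cases hσ : σ = 1
  · exact ⟨[], by simp [IsReducedWordFor, hσ]⟩
  · obtain ⟨k, hk⟩ := exists_isLeftDescent hσ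
    obtain ⟨w, hw⟩ := exists_isReducedWordFor (simpleSwap n k * σ)
    exact ⟨k :: w, isReducedWordFor_cons_iff.2 ⟨hk, hw⟩⟩
termination_by σ.numInversions
decreasing_by exact hk

lemma IsReducedWordFor.of_wordProd_eq {u v : List ℕ} (hu : IsReducedWordFor σ u)
    (hl : v.length = u.length) (hp : wordProd n v = wordProd n u) : IsReducedWordFor σ v :=
  ⟨hl.trans hu.1, hp.trans hu.2⟩

lemma IsLeftDescent.simpleSwap_mul_of_far (hk : IsLeftDescent σ k) (h : j + 2 ≤ k ∨ k + 2 ≤ j) :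
    IsLeftDescent (simpleSwap n j * σ) k := by
  obtain ⟨hk, hlt⟩ := isLeftDescent_iff.1 hk
  refine isLeftDescent_iff.2 ⟨hk, ?_⟩
  rwa [simpleSwap_mul_inv_apply, simpleSwap_mul_inv_apply, simpleSwap_apply_of_ne,
    simpleSwap_apply_of_ne] <;> omega

lemma IsLeftDescent.simpleSwap_mul_of_adjacent (hk : IsLeftDescent σ k)
    (hk' : IsLeftDescent σ (k + 1)) :
    IsLeftDescent (simpleSwap n k * σ) (k + 1) ∧
      IsLeftDescent (simpleSwap n (k + 1) * (simpleSwap n k * σ)) k := by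
  obtain ⟨hk, hlt⟩ := isLeftDescent_iff.1 hk
  obtain ⟨hk', hlt'⟩ := isLeftDescent_iff.1 hk'
  refine ⟨isLeftDescent_iff.2 ⟨hk', ?_⟩, isLeftDescent_iff.2 ⟨hk, ?_⟩⟩
  · rw [simpleSwap_mul_inv_apply, simpleSwap_mul_inv_apply, simpleSwap_apply_right,
      simpleSwap_apply_of_ne] <;> first | exact hlt'.trans hlt | omega
  · have e₁ : simpleSwap n k (simpleSwap n (k + 1) ⟨k + 1, hk⟩) = ⟨k + 1 + 1, hk'⟩ := by
      rw [simpleSwap_apply_left, simpleSwap_apply_of_ne] <;> omega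
    have e₂ : simpleSwap n k (simpleSwap n (k + 1) ⟨k, by omega⟩) = ⟨k + 1, hk⟩ := by
      rw [simpleSwap_apply_of_ne (m := k), simpleSwap_apply_left] <;> omega
    rwa [simpleSwap_mul_inv_apply, simpleSwap_mul_inv_apply, simpleSwap_mul_inv_apply,
      simpleSwap_mul_inv_apply, e₁, e₂]

lemma exists_isReducedWordFor_comm (hj : IsLeftDescent σ j) (hk : IsLeftDescent σ k)
    (h : j + 2 ≤ k ∨ k + 2 ≤ j) :
    ∃ z, IsReducedWordFor σ (j :: k :: z) ∧ IsReducedWordFor σ (k :: j :: z) := by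
  obtain ⟨z, hz⟩ := exists_isReducedWordFor (simpleSwap n k * (simpleSwap n j * σ))
  have hjk : IsReducedWordFor σ (j :: k :: z) := isReducedWordFor_cons_iff.2
    ⟨hj, isReducedWordFor_cons_iff.2 ⟨hk.simpleSwap_mul_of_far h, hz⟩⟩
  refine ⟨z, hjk, hjk.of_wordProd_eq rfl ?_⟩
  simp only [wordProd_cons, ← mul_assoc, simpleSwap_mul_comm h]

lemma exists_isReducedWordFor_braid (hk : IsLeftDescent σ k) (hk' : IsLeftDescent σ (k + 1)) :
    ∃ z, IsReducedWordFor σ (k :: (k + 1) :: k :: z) ∧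
      IsReducedWordFor σ ((k + 1) :: k :: (k + 1) :: z) := by
  obtain ⟨h₁, h₂⟩ := hk.simpleSwap_mul_of_adjacent hk'
  obtain ⟨z, hz⟩ := exists_isReducedWordFor
    (simpleSwap n k * (simpleSwap n (k + 1) * (simpleSwap n k * σ)))
  have hw : IsReducedWordFor σ (k :: (k + 1) :: k :: z) := isReducedWordFor_cons_iff.2
    ⟨hk, isReducedWordFor_cons_iff.2 ⟨h₁, isReducedWordFor_cons_iff.2 ⟨h₂, hz⟩⟩⟩
  have hn : k + 2 < n := (isLeftDescent_iff.1 hk').1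
  refine ⟨z, hw, hw.of_wordProd_eq rfl ?_⟩
  simp only [wordProd_cons, ← mul_assoc, simpleSwap_braid hn]

lemma exists_wordMove_of_isLeftDescent (hj : IsLeftDescent σ j) (hk : IsLeftDescent σ k)
    (hjk : j ≠ k) : ∃ p q, IsReducedWordFor σ (j :: p) ∧ IsReducedWordFor σ (k :: q) ∧
      WordMove (j :: p) (k :: q) := by
  rcases (by omega : j + 2 ≤ k ∨ k + 2 ≤ j ∨ k = j + 1 ∨ j = k + 1) with h | h | rfl | rfl
  · obtain ⟨z, h₁, h₂⟩ := exists_isReducedWordFor_comm hj hk (.inl h)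
    exact ⟨_, _, h₁, h₂, .comm [] z j k (.inl h)⟩
  · obtain ⟨z, h₁, h₂⟩ := exists_isReducedWordFor_comm hj hk (.inr h)
    exact ⟨_, _, h₁, h₂, .comm [] z j k (.inr h)⟩
  · obtain ⟨z, h₁, h₂⟩ := exists_isReducedWordFor_braid hj hk
    exact ⟨_, _, h₁, h₂, .braid [] z j⟩
  · obtain ⟨z, h₁, h₂⟩ := exists_isReducedWordFor_braid hk hj
    exact ⟨_, _, h₂, h₁, .braid_inv [] z k⟩

theorem IsReducedWordFor.reflTransGen_wordMove {u v : List ℕ} (hu : IsReducedWordFor σ u)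
    (hv : IsReducedWordFor σ v) : ReflTransGen WordMove u v := by
  obtain ⟨m, hm⟩ : ∃ m, σ.numInversions = m := ⟨_, rfl⟩
  induction m using Nat.strong_induction_on generalizing σ u v with
  | _ m ih =>
    have sameHead {k p q} (hp : IsReducedWordFor σ (k :: p)) (hq : IsReducedWordFor σ (k :: q)) :
        ReflTransGen WordMove (k :: p) (k :: q) := by
      rw [isReducedWordFor_cons_iff] at hp hq
      exact ReflTransGen.lift (List.cons k) (fun _ _ => WordMove.cons k) p q
        (ih _ (hm ▸ hp.1) hp.2 hq.2 rfl)
    have hl := hu.1.trans hv.1.symm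
    rcases u with _ | ⟨j, p⟩ <;> rcases v with _ | ⟨k, q⟩
    · exact .refl
    · simp at hl
    · simp at hl
    by_cases hjk : j = k
    · subst hjk
      exact sameHead hu hv
    · obtain ⟨p', q', hp', hq', hmove⟩ := exists_wordMove_of_isLeftDescent
        (isReducedWordFor_cons_iff.1 hu).1 (isReducedWordFor_cons_iff.1 hv).1 hjk
      exact (sameHead hu hp').trans (.head hmove (sameHead hq' hv))

end ReducedWords

lemma numInversions_reversePerm (n : ℕ) : (reversePerm n).numInversions = n * (n - 1) / 2 := by
  rw [numInversions_of_strictAnti Fin.rev_strictAnti, Fintype.card_fin, Nat.choose_two_right]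

lemma IsReducedWord.isReducedWordFor_reversePerm {n : ℕ} {w : List ℕ} (h : IsReducedWord n w) :
    IsReducedWordFor (reversePerm n) w :=
  ⟨h.1.trans (numInversions_reversePerm n).symm, h.2.2⟩

theorem tits_connectivity_general (n : ℕ) (w₁ w₂ : List ℕ)
    (h₁ : IsReducedWord n w₁) (h₂ : IsReducedWord n w₂) :
    Relation.ReflTransGen WordMove w₁ w₂ :=
  h₁.isReducedWordFor_reversePerm.reflTransGen_wordMove h₂.isReducedWordFor_reversePerm

/-- Tits: any reduced word of order `n` may be transformed into any other
by a finite sequence of commuting moves and braid moves. -/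
theorem tits_connectivity (n : ℕ) (hn : 1 ≤ n) (w₁ w₂ : List ℕ)
    (h₁ : IsReducedWord n w₁) (h₂ : IsReducedWord n w₂) :
    Relation.ReflTransGen WordMove w₁ w₂ :=
  tits_connectivity_general n w₁ w₂ h₁ h₂
end

section
/- Let n ≥ 2, let (a_i, b_i, p_i)_{i=1}^k be a sweep of order n, and let (a'_j, b'_j, p'_j)_{j=1}^m be a transposition shuffle of order n-1. Then the concatenated lazy transposition sequence (a_1,b_1,p_1), …, (a_k,b_k,p_k), (a'_1,b'_1,p'_1), …, (a'_m,b'_m,p'_m) of order n (where the entries a'_j, b'_j ∈ {1,…,n-1} are regarded as elements of {1,…,n}) is a transposition shuffle of order n. -/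
open Finset

/-- `(aᵢ, bᵢ, pᵢ)ᵢ` is a sweep of order `n`: a lazy transposition sequence such that the
last entry `π(ω)(n)` of the resulting permutation is uniform on `{1,…,n}`
(positions are `0`-based: the last position is `⟨n-1, _⟩`). -/
def IsSweep (n ℓ : ℕ) (hn : 0 < n) (a b : Fin ℓ → Fin n) (p : Fin ℓ → ℝ) : Prop :=
  (∀ i, a i ≠ b i) ∧ (∀ i, 0 ≤ p i ∧ p i ≤ 1) ∧
    ∀ j : Fin n,
      ∑ ω ∈ univ.filter fun ω : Fin ℓ → Bool =>
          lazyPerm a b ω ⟨n - 1, Nat.sub_lt hn Nat.one_pos⟩ = j,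
        lazyWeight p ω = 1 / (n : ℝ)


/-!
Let `ι : S_{n-1} → S_n` extend a permutation by fixing the last point `n`; its image is the
stabiliser of `n`. The concatenated sequence produces `π₁(ω₁) · ι(π₂(ω₂))`. Conditionally on
`ω₁`, uniformity of `π₂` makes the product equal to `α` with probability `1/(n-1)!` when
`π₁(ω₁)⁻¹ α` fixes `n`, i.e. when `π₁(ω₁)(n) = α(n)`, and `0` otherwise. The sweep property
gives `π₁(ω₁)(n) = α(n)` probability `1/n`, so `α` has probability `1/n!`.
-/

namespace Equiv.Perm

theorem viaEmbedding_swap {α β : Type*} [DecidableEq α] [DecidableEq β] (ι : α ↪ β) (x y : α) :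
    (swap x y).viaEmbedding ι = swap (ι x) (ι y) := by
  ext z
  by_cases hz : z ∈ Set.range ι
  · obtain ⟨w, rfl⟩ := hz
    rw [viaEmbedding_apply, swap_apply_def, swap_apply_def]
    split_ifs <;> simp_all
  · rw [viaEmbedding_apply_of_notMem _ _ _ hz,
      swap_apply_of_ne_of_ne (fun h => hz ⟨x, h.symm⟩) (fun h => hz ⟨y, h.symm⟩)]

theorem mem_range_viaEmbeddingHom_iff {α β : Type*} (ι : α ↪ β) (σ : Perm β) :
    σ ∈ (viaEmbeddingHom ι).range ↔ ∀ y ∉ Set.range ι, σ y = y := by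
  constructor
  · rintro ⟨γ, rfl⟩ y hy
    exact viaEmbedding_apply_of_notMem γ ι y hy
  · intro hσ
    have hrange : ∀ y, σ y ∈ Set.range ι ↔ y ∈ Set.range ι := by
      intro y
      by_cases hy : y ∈ Set.range ι
      · refine iff_of_true (by_contra fun h => h ?_) hy
        rwa [σ.injective (hσ _ h)]
      · rw [hσ y hy]
    let e := Equiv.ofInjective ι ι.injective
    refine ⟨e.permCongr.symm (σ.subtypePerm hrange), Equiv.ext fun y => ?_⟩
    by_cases hy : y ∈ Set.range ι
    · obtain ⟨x, rfl⟩ := hy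
      rw [viaEmbeddingHom_apply, viaEmbedding_apply]
      simp [e, Equiv.apply_ofInjective_symm]
    · rw [viaEmbeddingHom_apply, viaEmbedding_apply_of_notMem _ _ _ hy, hσ y hy]

end Equiv.Perm

theorem Fin.notMem_range_castLE_pred_iff {n : ℕ} (hn : 0 < n) (y : Fin n) :
    y ∉ Set.range (Fin.castLE (Nat.sub_le n 1)) ↔ y = ⟨n - 1, Nat.sub_lt hn Nat.one_pos⟩ := by
  simp only [Fin.range_castLE, Set.mem_ofPred_eq, not_lt, Fin.ext_iff]
  omega

section LazyTransposition

variable {n k m : ℕ}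

theorem lazyPerm_append (a b : Fin k → Fin n) (c d : Fin m → Fin n)
    (ω₁ : Fin k → Bool) (ω₂ : Fin m → Bool) :
    lazyPerm (Fin.append a c) (Fin.append b d) (Fin.append ω₁ ω₂)
      = lazyPerm a b ω₁ * lazyPerm c d ω₂ := by
  simp only [lazyPerm, List.ofFn_add, List.prod_append, Fin.append_left, Fin.append_right,
    show ∀ i : Fin k, Fin.castLE (Nat.le_add_right k m) i = Fin.castAdd m i from fun _ => rfl]

theorem lazyWeight_append (p : Fin k → ℝ) (q : Fin m → ℝ) (ω₁ : Fin k → Bool)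
    (ω₂ : Fin m → Bool) :
    lazyWeight (Fin.append p q) (Fin.append ω₁ ω₂) = lazyWeight p ω₁ * lazyWeight q ω₂ := by
  simp only [lazyWeight, Fin.prod_univ_add, Fin.append_left, Fin.append_right]

theorem lazyPerm_embedding {n' : ℕ} (ι : Fin n' ↪ Fin n) (a b : Fin m → Fin n')
    (ω : Fin m → Bool) :
    lazyPerm (fun j => ι (a j)) (fun j => ι (b j)) ω
      = Equiv.Perm.viaEmbeddingHom ι (lazyPerm a b ω) := by
  simp only [lazyPerm, MonoidHom.map_list_prod, List.map_ofFn]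
  refine congrArg List.prod (congrArg List.ofFn (funext fun i => ?_))
  cases h : ω i
  · simp [h]
  · simp [h, Equiv.Perm.viaEmbeddingHom_apply, Equiv.Perm.viaEmbedding_swap]

theorem sum_lazyWeight_append (a b : Fin k → Fin n) (c d : Fin m → Fin n) (p : Fin k → ℝ)
    (q : Fin m → ℝ) (α : Equiv.Perm (Fin n)) :
    ∑ ω ∈ univ.filter fun ω => lazyPerm (Fin.append a c) (Fin.append b d) ω = α,
        lazyWeight (Fin.append p q) ω
      = ∑ ω₁, lazyWeight p ω₁ *
          ∑ ω₂ ∈ univ.filter fun ω₂ => lazyPerm c d ω₂ = (lazyPerm a b ω₁)⁻¹ * α,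
            lazyWeight q ω₂ := by
  rw [sum_filter, ← (Fin.appendEquiv k m).sum_comp, Fintype.sum_prod_type]
  refine sum_congr rfl fun ω₁ _ => ?_
  rw [sum_filter, mul_sum]
  refine sum_congr rfl fun ω₂ _ => ?_
  simp only [Fin.appendEquiv, Equiv.coe_fn_mk, lazyPerm_append, lazyWeight_append,
    eq_inv_mul_iff_mul_eq, mul_ite, mul_zero]

theorem IsTranspositionShuffle.sum_lazyWeight_embedding {n' : ℕ} {a b : Fin m → Fin n'}
    {p : Fin m → ℝ} (h : IsTranspositionShuffle n' m a b p) (ι : Fin n' ↪ Fin n)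
    (σ : Equiv.Perm (Fin n)) :
    ∑ ω ∈ univ.filter fun ω => lazyPerm (fun j => ι (a j)) (fun j => ι (b j)) ω = σ,
        lazyWeight p ω
      = if σ ∈ (Equiv.Perm.viaEmbeddingHom ι).range then 1 / (n'.factorial : ℝ) else 0 := by
  simp_rw [lazyPerm_embedding]
  split_ifs with hσ
  · obtain ⟨β, rfl⟩ := hσ
    simp_rw [(Equiv.Perm.viaEmbeddingHom_injective ι).eq_iff]
    exact h.2.2 β
  · exact sum_eq_zero fun ω hω => absurd ⟨_, (mem_filter.mp hω).2⟩ hσ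

end LazyTransposition

/-- the concatenation of a sweep of order `n` with a transposition shuffle of
order `n - 1` (whose positions are regarded as positions of `{1,…,n}`) is a transposition
shuffle of order `n`. -/
theorem sweep_append_shuffle (n : ℕ) (hn : 2 ≤ n) (k m : ℕ)
    (a b : Fin k → Fin n) (p : Fin k → ℝ)
    (hs : IsSweep n k (by omega) a b p)
    (a' b' : Fin m → Fin (n - 1)) (p' : Fin m → ℝ)
    (h' : IsTranspositionShuffle (n - 1) m a' b' p') :
    IsTranspositionShuffle n (k + m)
      (Fin.append a fun j => ⟨((a' j : ℕ)), by have := (a' j).isLt; omega⟩)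
      (Fin.append b fun j => ⟨((b' j : ℕ)), by have := (b' j).isLt; omega⟩)
      (Fin.append p p') := by
  obtain ⟨hab, hp, hlast⟩ := hs
  set ι := Fin.castLEEmb (Nat.sub_le n 1)
  show IsTranspositionShuffle n (k + m) (Fin.append a fun j => ι (a' j))
    (Fin.append b fun j => ι (b' j)) (Fin.append p p')
  set last : Fin n := ⟨n - 1, by omega⟩
  have hrange (σ : Equiv.Perm (Fin n)) :
      σ ∈ (Equiv.Perm.viaEmbeddingHom ι).range ↔ σ last = last := by
    simp only [Equiv.Perm.mem_range_viaEmbeddingHom_iff, ι, Fin.coe_castLEEmb,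
      Fin.notMem_range_castLE_pred_iff (by omega : 0 < n), forall_eq, last]
  refine ⟨?_, ?_, fun α => ?_⟩
  · simpa [Fin.forall_fin_add] using ⟨hab, h'.1⟩
  · simpa [Fin.forall_fin_add] using ⟨hp, h'.2.1⟩
  simp_rw [sum_lazyWeight_append, h'.sum_lazyWeight_embedding ι, hrange, Equiv.Perm.mul_apply,
    Equiv.Perm.inv_eq_iff_eq, eq_comm (a := α last), mul_ite, mul_zero, ← sum_filter, ← sum_mul]
  rw [hlast, div_mul_div_comm, one_mul, ← Nat.cast_mul, Nat.mul_factorial_pred (by omega)]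
end
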